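/- Let 0 < r < 1 and let N be a bounded linear operator on a complex Hilbert space K. Then N is an 𝔸_r-unitary if and only if there exist closed, mutually orthogonal subspaces K₁ and K₂ of K with K = K₁ ⊕ K₂, both invariant under N and under N*, such that the restriction of N to K₁ is a unitary operator on K₁ and the restriction of r⁻¹N to K₂ is a unitary operator on K₂ (i.e. with respect to K = K₁ ⊕ K₂ one has N = U₁ ⊕ rU₂ for unitaries U₁ on K₁ and U₂ on K₂). -/

import Mathlib

/-!
For a normal `N`, the continuous functional calculus turns the spectral condition into the
operator identity `(N†N - 1)(N†N - r²) = 0`, because `z ↦ (|z|² - 1)(|z|² - r²)` vanishes exactly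
on the two circles. Since `1 ≠ r²`, this identity says that the eigenspaces `K₁`, `K₂` of the
self-adjoint operator `N†N` for `1` and `r²` span `K`; they are closed, orthogonal and invariant
under `N` and `N†`, and normality makes `N` a unitary on `K₁` and `r` times a unitary on `K₂`.
Conversely, if `N` is `c` times a unitary on a subspace invariant under `N` and `N†`, polarization
gives `N†N = NN† = c²` there, so the decomposition forces both normality and the identity.
-/

open ContinuousLinearMap

/-- `T` is an `𝔸_r`-unitary: a normal operator with spectrum in the boundary
`{z : |z| = 1} ∪ {z : |z| = r}` of the annulus. -/
noncomputable def IsArUnitary {K : Type*} [NormedAddCommGroup K] [InnerProductSpace ℂ K]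
    [CompleteSpace K] (r : ℝ) (N : K →L[ℂ] K) : Prop :=
  adjoint N * N = N * adjoint N ∧
  spectrum ℂ N ⊆ {z : ℂ | ‖z‖ = 1 ∨ ‖z‖ = r}

open Module End

theorem IsStarNormal.spectrum_subset_iff {A : Type*} [CStarAlgebra A] {a : A} [IsStarNormal a]
    {s r : ℝ} (hs : 0 ≤ s) (hr : 0 ≤ r) :
    spectrum ℂ a ⊆ {z : ℂ | ‖z‖ = s ∨ ‖z‖ = r} ↔
      (star a * a - (s ^ 2 : ℂ) • 1) * (star a * a - (r ^ 2 : ℂ) • 1) = 0 := by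
  have hcfc : (star a * a - (s ^ 2 : ℂ) • 1) * (star a * a - (r ^ 2 : ℂ) • 1) =
      cfc (fun z : ℂ ↦ (star z * z - s ^ 2) * (star z * z - r ^ 2)) a := by
    rw [cfc_mul .., cfc_sub .., cfc_sub .., cfc_mul .., cfc_star_id (a := a), cfc_id' ℂ a,
      cfc_const (s ^ 2 : ℂ) a, cfc_const (r ^ 2 : ℂ) a, Algebra.algebraMap_eq_smul_one,
      Algebra.algebraMap_eq_smul_one]
  rw [hcfc, ← cfc_zero ℂ a, cfc_eq_cfc_iff_eqOn]
  refine forall₂_congr fun z _ ↦ ?_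
  have hz : star z * z = ((‖z‖ ^ 2 : ℝ) : ℂ) := by
    rw [RCLike.star_def, mul_comm, Complex.mul_conj', Complex.ofReal_pow]
  simp only [Set.mem_ofPred_eq, hz, Pi.zero_apply, mul_eq_zero, sub_eq_zero]
  norm_cast
  rw [pow_left_inj₀ (norm_nonneg z) hs two_ne_zero, pow_left_inj₀ (norm_nonneg z) hr two_ne_zero]

open Polynomial in
theorem Module.End.eigenspace_sup_eigenspace_eq_top_iff {k M : Type*} [Field k] [AddCommGroup M]
    [Module k M] {f : End k M} {μ ν : k} (hμν : μ ≠ ν) :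
    f.eigenspace μ ⊔ f.eigenspace ν = ⊤ ↔ (f - μ • 1) * (f - ν • 1) = 0 := by
  have hlin (c : k) : aeval f (X - C c) = f - c • 1 := by
    rw [map_sub, aeval_X, aeval_C, Algebra.algebraMap_eq_smul_one]
  rw [eigenspace_def, eigenspace_def, ← hlin, ← hlin, sup_ker_aeval_eq_ker_aeval_mul_of_coprime f
    (isCoprime_X_sub_C_of_isUnit_sub (sub_ne_zero.mpr hμν).isUnit), LinearMap.ker_eq_top,
    map_mul]

theorem ContinuousLinearMap.mapsTo_eigenspace_of_commute {R M : Type*} [CommRing R]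
    [AddCommGroup M] [Module R M] [TopologicalSpace M] {S T : M →L[R] M} (h : Commute T S)
    (μ : R) : Set.MapsTo S (eigenspace (T : End R M) μ) (eigenspace (T : End R M) μ) :=
  mapsTo_genEigenspace_of_comm
    (show Commute (T : End R M) S from congrArg ((↑) : (M →L[R] M) → End R M) h.eq) μ 1

theorem IsSelfAdjoint.inner_eq_zero_of_mem_eigenspace {𝕜 E : Type*} [RCLike 𝕜]
    [NormedAddCommGroup E] [InnerProductSpace 𝕜 E] [CompleteSpace E] {T : E →L[𝕜] E}
    (hT : IsSelfAdjoint T) {μ ν : 𝕜} (hμν : μ ≠ ν) {x y : E}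
    (hx : x ∈ eigenspace (T : End 𝕜 E) μ) (hy : y ∈ eigenspace (T : End 𝕜 E) ν) :
    inner 𝕜 x y = 0 :=
  hT.isSymmetric.orthogonalFamily_eigenspaces hμν ⟨x, hx⟩ ⟨y, hy⟩

section Hilbert

variable {K : Type*} [NormedAddCommGroup K] [InnerProductSpace ℂ K] [CompleteSpace K]

/-- On `K₀`, the operator `N` is `c` times a unitary of `K₀`, and `K₀` reduces `N`. -/
def RestrictsToScaledUnitary (N : K →L[ℂ] K) (K₀ : Submodule ℂ K) (c : ℝ) : Prop :=
  (∀ x ∈ K₀, N x ∈ K₀) ∧ (∀ x ∈ K₀, adjoint N x ∈ K₀) ∧ (∀ x ∈ K₀, ‖N x‖ = c * ‖x‖) ∧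
    ∀ x ∈ K₀, ∃ y ∈ K₀, N y = x

namespace ContinuousLinearMap

variable {N : K →L[ℂ] K} {c : ℝ}

theorem commute_adjoint_mul_self_self (hN : adjoint N * N = N * adjoint N) :
    Commute (adjoint N * N) N :=
  (congrArg (· * N) hN).trans (mul_assoc _ _ _)

theorem commute_adjoint_mul_self_adjoint (hN : adjoint N * N = N * adjoint N) :
    Commute (adjoint N * N) (adjoint N) :=
  (mul_assoc _ _ _).trans (congrArg (adjoint N * ·) hN.symm)

theorem norm_apply_of_mem_eigenspace_adjoint_mul_self (hc : 0 ≤ c) {x : K}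
    (hx : x ∈ eigenspace ↑(adjoint N * N) (c ^ 2 : ℂ)) : ‖N x‖ = c * ‖x‖ := by
  rw [mem_eigenspace_iff, coe_coe] at hx
  have hsq : ‖N x‖ ^ 2 = (c * ‖x‖) ^ 2 := by
    rw [apply_norm_sq_eq_inner_adjoint_left]
    change RCLike.re (inner ℂ ((adjoint N * N) x) x) = _
    simp [hx, mul_pow, ← Complex.ofReal_pow]
  exact (pow_left_inj₀ (norm_nonneg _) (by positivity) two_ne_zero).mp hsq

theorem exists_apply_eq_of_mem_eigenspace_adjoint_mul_self (hN : adjoint N * N = N * adjoint N)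
    (hc : c ≠ 0) {x : K} (hx : x ∈ eigenspace ↑(adjoint N * N) (c ^ 2 : ℂ)) :
    ∃ y ∈ eigenspace ↑(adjoint N * N) (c ^ 2 : ℂ), N y = x := by
  refine ⟨((c : ℂ) ^ 2)⁻¹ • adjoint N x, Submodule.smul_mem _ _
    (mapsTo_eigenspace_of_commute (commute_adjoint_mul_self_adjoint hN) _ hx), ?_⟩
  rw [mem_eigenspace_iff, coe_coe] at hx
  calc N (((c : ℂ) ^ 2)⁻¹ • adjoint N x) = ((c : ℂ) ^ 2)⁻¹ • (adjoint N * N) x := by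
        rw [map_smul, hN]; rfl
    _ = x := by rw [hx, inv_smul_smul₀ (by exact_mod_cast pow_ne_zero 2 hc)]

theorem restrictsToScaledUnitary_eigenspace_adjoint_mul_self
    (hN : adjoint N * N = N * adjoint N) (hc : 0 < c) :
    RestrictsToScaledUnitary N (eigenspace ↑(adjoint N * N) (c ^ 2 : ℂ)) c :=
  ⟨fun _ ↦ (mapsTo_eigenspace_of_commute (commute_adjoint_mul_self_self hN) _ ·),
    fun _ ↦ (mapsTo_eigenspace_of_commute (commute_adjoint_mul_self_adjoint hN) _ ·),
    fun _ ↦ norm_apply_of_mem_eigenspace_adjoint_mul_self hc.le,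
    fun _ ↦ exists_apply_eq_of_mem_eigenspace_adjoint_mul_self hN hc.ne'⟩

end ContinuousLinearMap

namespace RestrictsToScaledUnitary

variable {N : K →L[ℂ] K} {K₀ : Submodule ℂ K} {c : ℝ}

theorem le_eigenspace_adjoint_mul_self (h : RestrictsToScaledUnitary N K₀ c) :
    K₀ ≤ eigenspace ↑(adjoint N * N) (c ^ 2 : ℂ) := by
  obtain ⟨hN, hN', hnorm, -⟩ := h
  set T : End ℂ K := ↑(adjoint N * N) - (c ^ 2 : ℂ) • 1
  have hTx (x : K) : T x = adjoint N (N x) - (c ^ 2 : ℂ) • x := rfl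
  have hT (x : K) (hx : x ∈ K₀) : T x ∈ K₀ := K₀.sub_mem (hN' _ (hN x hx)) (K₀.smul_mem _ hx)
  have hT0 : T.restrict hT = 0 := by
    refine (inner_map_self_eq_zero _).mp fun x ↦ ?_
    rw [Submodule.coe_inner, LinearMap.coe_restrict_apply, hTx, inner_sub_left,
      adjoint_inner_left, inner_smul_left, inner_self_eq_norm_sq_to_K,
      inner_self_eq_norm_sq_to_K, hnorm x x.2]
    simp [mul_pow]
  intro x hx
  rw [eigenspace_def, LinearMap.mem_ker]
  exact congrArg Subtype.val (LinearMap.congr_fun hT0 ⟨x, hx⟩)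

theorem eqOn_adjoint_mul_self (h : RestrictsToScaledUnitary N K₀ c) :
    Set.EqOn (adjoint N * N) (N * adjoint N) K₀ := by
  intro x hx
  have hx' := h.le_eigenspace_adjoint_mul_self hx
  obtain ⟨y, hy, rfl⟩ := h.2.2.2 x hx
  have hy' := h.le_eigenspace_adjoint_mul_self hy
  rw [mem_eigenspace_iff, coe_coe] at hx' hy'
  calc (adjoint N * N) (N y) = (c ^ 2 : ℂ) • N y := hx'
    _ = N ((adjoint N * N) y) := by rw [hy', map_smul]
    _ = (N * adjoint N) (N y) := rfl

end RestrictsToScaledUnitary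

theorem isArUnitary_iff {r : ℝ} (hr0 : 0 ≤ r) (hr1 : r ≠ 1) {N : K →L[ℂ] K} :
    IsArUnitary r N ↔ adjoint N * N = N * adjoint N ∧
      eigenspace (↑(adjoint N * N) : End ℂ K) 1 ⊔ eigenspace ↑(adjoint N * N) (r ^ 2 : ℂ) = ⊤ := by
  refine and_congr_right fun hN ↦ ?_
  have : IsStarNormal N := ⟨by rw [commute_iff_eq, star_eq_adjoint, hN]⟩
  have hr2 : (1 : ℂ) ≠ (r ^ 2 : ℂ) := by
    norm_cast
    exact fun h ↦ hr1 ((pow_eq_one_iff_of_nonneg hr0 two_ne_zero).mp h.symm)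
  rw [IsStarNormal.spectrum_subset_iff zero_le_one hr0, eigenspace_sup_eigenspace_eq_top_iff hr2,
    star_eq_adjoint, ← coe_inj]
  simp

end Hilbert

theorem stmt9 {K : Type*} [NormedAddCommGroup K] [InnerProductSpace ℂ K] [CompleteSpace K]
    (r : ℝ) (hr0 : 0 < r) (hr1 : r < 1) (N : K →L[ℂ] K) :
    IsArUnitary r N ↔
      ∃ K₁ K₂ : Submodule ℂ K,
        IsClosed (K₁ : Set K) ∧ IsClosed (K₂ : Set K) ∧
        (∀ h₁ ∈ K₁, ∀ h₂ ∈ K₂, (inner ℂ h₁ h₂ : ℂ) = 0) ∧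
        K₁ ⊔ K₂ = ⊤ ∧
        (∀ h ∈ K₁, N h ∈ K₁) ∧ (∀ h ∈ K₁, adjoint N h ∈ K₁) ∧
        (∀ h ∈ K₂, N h ∈ K₂) ∧ (∀ h ∈ K₂, adjoint N h ∈ K₂) ∧
        (∀ h ∈ K₁, ‖N h‖ = ‖h‖) ∧ (∀ h ∈ K₁, ∃ h' ∈ K₁, N h' = h) ∧
        (∀ h ∈ K₂, ‖N h‖ = r * ‖h‖) ∧ (∀ h ∈ K₂, ∃ h' ∈ K₂, N h' = h) := by
  have hone : ((1 : ℝ) : ℂ) ^ 2 = 1 := by norm_num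
  rw [isArUnitary_iff hr0.le hr1.ne]
  constructor
  · rintro ⟨hN, hsup⟩
    have hQ : IsSelfAdjoint (adjoint N * N) := star_eq_adjoint N ▸ IsSelfAdjoint.star_mul_self N
    have hr2 : (1 : ℂ) ≠ (r ^ 2 : ℂ) := by
      exact_mod_cast (pow_lt_one₀ hr0.le hr1 two_ne_zero).ne'
    obtain ⟨hN₁, hA₁, hnorm₁, hsurj₁⟩ :=
      hone ▸ restrictsToScaledUnitary_eigenspace_adjoint_mul_self hN one_pos
    obtain ⟨hN₂, hA₂, hnorm₂, hsurj₂⟩ := restrictsToScaledUnitary_eigenspace_adjoint_mul_self hN hr0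
    exact ⟨_, _, isClosed_eigenspace _ _, isClosed_eigenspace _ _,
      fun _ hx _ hy ↦ hQ.inner_eq_zero_of_mem_eigenspace hr2 hx hy, hsup, hN₁, hA₁, hN₂, hA₂,
      fun x hx ↦ (hnorm₁ x hx).trans (one_mul _), hsurj₁, hnorm₂, hsurj₂⟩
  · rintro ⟨K₁, K₂, -, -, -, hsup, hN₁, hA₁, hN₂, hA₂, hnorm₁, hsurj₁, hnorm₂, hsurj₂⟩
    have h₁ : RestrictsToScaledUnitary N K₁ 1 := ⟨hN₁, hA₁, by simpa using hnorm₁, hsurj₁⟩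
    have h₂ : RestrictsToScaledUnitary N K₂ r := ⟨hN₂, hA₂, hnorm₂, hsurj₂⟩
    refine ⟨LinearMap.ext_on_codisjoint (codisjoint_iff.mpr hsup) h₁.eqOn_adjoint_mul_self
      h₂.eqOn_adjoint_mul_self, top_le_iff.mp (hsup ▸ sup_le_sup ?_ h₂.le_eigenspace_adjoint_mul_self)⟩
    simpa using h₁.le_eigenspace_adjoint_mul_self
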